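/- In model R, E(W_n) = (W_0/T_0)·(n·m·c + T_0) for all n ≥ 0, and the second moment is E(W_n²) = [C(n−1+μ_1, n)·C(n−1+μ_2, n) / C(n−1+T_0/(mc), n)²] · ( W_0² + (W_0·c²·m/T_0) · Σ_{ℓ=0}^{n−1} C(ℓ+T_0/(mc), ℓ+1)² / (C(ℓ+μ_1, ℓ+1)·C(ℓ+μ_2, ℓ+1)) ), where μ_{1,2} := (T_0 + mc ± c·√m)/(mc) and C(x,n) denotes the generalized binomial coefficient for real x; this determines V(W_n) = E(W_n²) − E(W_n)². -/

import Mathlib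

open Finset

/-- Total number of balls after `n` draws: `T_n = W_0 + B_0 + n·m·c`. -/
def urnT (W0 B0 m c n : ℕ) : ℕ := W0 + B0 + n * m * c

/-- Probability mass function of the number of white balls after `n` draws in
model `R` (at each step `m` balls are drawn one by one with replacement and, for
each drawn ball, `c` balls of the same color are added). -/
noncomputable def massR (W0 B0 m c : ℕ) : ℕ → ℕ → ℝ
  | 0 => fun v => if v = W0 then 1 else 0
  | n + 1 => fun v =>
      ∑ w ∈ Finset.range (urnT W0 B0 m c n + 1), ∑ k ∈ Finset.range (m + 1),
        if v = w + c * k then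
          massR W0 B0 m c n w *
            ((Nat.choose m k : ℝ) * (w : ℝ) ^ k *
                ((urnT W0 B0 m c n : ℝ) - (w : ℝ)) ^ (m - k) /
              (urnT W0 B0 m c n : ℝ) ^ m)
        else 0

/-- The `s`-th moment `E(W_n^s)` of the number of white balls in model `R`. -/
noncomputable def momR (W0 B0 m c s n : ℕ) : ℝ :=
  ∑ w ∈ Finset.range (urnT W0 B0 m c n + 1), massR W0 B0 m c n w * (w : ℝ) ^ s

/-- Generalized binomial coefficient `C(x,n) = x(x-1)⋯(x-n+1)/n!` for real `x`. -/
noncomputable def gchoose (x : ℝ) (n : ℕ) : ℝ :=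
  (∏ i ∈ Finset.range n, (x - (i : ℝ))) / (Nat.factorial n : ℝ)

/-!
Given `W_n = w`, the number of white balls drawn at step `n + 1` is binomial with parameters
`m` and `w / T_n`, so the transition weights are Bernstein polynomials evaluated at `w / T_n`.
Their first two moments give
`E(W_{n+1}) = (1 + mc/T_n) E(W_n)` and `E(W_{n+1}²) = a_n E(W_n²) + (c²m/T_n) E(W_n)` with
`a_n = 1 + 2cm/T_n + c²m(m-1)/T_n²`. The first recurrence telescopes to `E(W_n) = W_0 T_n / T_0`,
so the inhomogeneous term of the second one is the constant `c²m W_0 / T_0`. Since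
`T_n² a_n = (T_n + mc)² - c²m = (mc)² (μ_1 + n)(μ_2 + n)`, products of the `a_j` are ratios of
rising factorials, which are the generalized binomial coefficients of the statement, and the
linear recurrence is solved by variation of constants.
-/

open Polynomial

theorem natCast_mul_sub_one {R : Type*} [Ring R] (k : ℕ) :
    ((k * (k - 1) : ℕ) : R) = k * (k - 1) := by
  cases k <;> simp

theorem bernsteinPolynomial_eval_div {m k : ℕ} (hk : k ≤ m) {T : ℝ} (hT : T ≠ 0) (w : ℝ) :
    (bernsteinPolynomial ℝ m k).eval (w / T) =
      m.choose k * w ^ k * (T - w) ^ (m - k) / T ^ m := by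
  obtain ⟨j, rfl⟩ := Nat.exists_eq_add_of_le hk
  simp only [bernsteinPolynomial, eval_mul, eval_pow, eval_natCast, eval_X, eval_sub, eval_one,
    one_sub_div hT, div_pow, Nat.add_sub_cancel_left, pow_add]
  field_simp

theorem sum_bernsteinPolynomial_eval_mul_add (m : ℕ) (p w c : ℝ) :
    ∑ k ∈ range (m + 1), (bernsteinPolynomial ℝ m k).eval p * (w + c * k) = w + c * m * p := by
  have h0 := congrArg (eval p) (bernsteinPolynomial.sum ℝ m)
  have h1 := congrArg (eval p) (bernsteinPolynomial.sum_smul ℝ m)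
  simp only [eval_finsetSum, nsmul_eq_mul, eval_mul, eval_natCast, eval_one, eval_X] at h0 h1
  calc ∑ k ∈ range (m + 1), (bernsteinPolynomial ℝ m k).eval p * (w + c * k)
      = w * ∑ k ∈ range (m + 1), (bernsteinPolynomial ℝ m k).eval p
        + c * ∑ k ∈ range (m + 1), k * (bernsteinPolynomial ℝ m k).eval p := by
        rw [mul_sum, mul_sum, ← sum_add_distrib]
        exact sum_congr rfl fun k _ => by ring
    _ = w + c * m * p := by rw [h0, h1]; ring

theorem sum_bernsteinPolynomial_eval_mul_add_sq (m : ℕ) (p w c : ℝ) :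
    ∑ k ∈ range (m + 1), (bernsteinPolynomial ℝ m k).eval p * (w + c * k) ^ 2 =
      w ^ 2 + (2 * w * c + c ^ 2) * m * p + c ^ 2 * m * (m - 1) * p ^ 2 := by
  have h0 := congrArg (eval p) (bernsteinPolynomial.sum ℝ m)
  have h1 := congrArg (eval p) (bernsteinPolynomial.sum_smul ℝ m)
  have h2 := congrArg (eval p) (bernsteinPolynomial.sum_mul_smul ℝ m)
  simp only [eval_finsetSum, nsmul_eq_mul, natCast_mul_sub_one, eval_mul, eval_natCast, eval_one,
    eval_sub, eval_X, eval_pow] at h0 h1 h2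
  calc ∑ k ∈ range (m + 1), (bernsteinPolynomial ℝ m k).eval p * (w + c * k) ^ 2
      = w ^ 2 * ∑ k ∈ range (m + 1), (bernsteinPolynomial ℝ m k).eval p
        + (2 * w * c + c ^ 2) * ∑ k ∈ range (m + 1), k * (bernsteinPolynomial ℝ m k).eval p
        + c ^ 2 * ∑ k ∈ range (m + 1), k * (k - 1) * (bernsteinPolynomial ℝ m k).eval p := by
        simp only [mul_sum, ← sum_add_distrib]
        exact sum_congr rfl fun k _ => by ring
    _ = _ := by rw [h0, h1, h2]; ring

theorem eq_prod_mul_add_sum_div_prod_of_succ_eq {K : Type*} [Field K] {x a b : ℕ → K}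
    (ha : ∀ n, a n ≠ 0) (hx : ∀ n, x (n + 1) = a n * x n + b n) (n : ℕ) :
    x n = (∏ j ∈ range n, a j) * (x 0 + ∑ ℓ ∈ range n, b ℓ / ∏ j ∈ range (ℓ + 1), a j) := by
  induction n with
  | zero => simp
  | succ n ih =>
    have hP : ∏ j ∈ range (n + 1), a j ≠ 0 := prod_ne_zero_iff.2 fun j _ => ha j
    rw [hx, ih, sum_range_succ, ← add_assoc, mul_add _ _ (b n / _), mul_div_cancel₀ _ hP,
      prod_range_succ]
    ring

theorem ascPochhammer_eval_eq_prod_range {R : Type*} [CommSemiring R] (n : ℕ) (r : R) :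
    (ascPochhammer R n).eval r = ∏ j ∈ range n, (r + j) := by
  induction n with
  | zero => simp
  | succ n ih => rw [ascPochhammer_succ_eval, ih, prod_range_succ]

theorem gchoose_natCast_sub_one_add (n : ℕ) (x : ℝ) :
    gchoose (n - 1 + x) n = (∏ j ∈ range n, (x + j)) / n.factorial := by
  rw [gchoose, ← descPochhammer_eval_eq_prod_range, descPochhammer_eval_eq_ascPochhammer,
    ascPochhammer_eval_eq_prod_range, show (n : ℝ) - 1 + x - n + 1 = x by ring]

theorem prod_mul_div_sq_eq_gchoose (n : ℕ) (x y z : ℝ) :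
    ∏ j ∈ range n, (x + j) * (y + j) / (z + j) ^ 2 =
      gchoose (n - 1 + x) n * gchoose (n - 1 + y) n / gchoose (n - 1 + z) n ^ 2 := by
  have hf : (n.factorial : ℝ) ^ 2 ≠ 0 := by positivity
  rw [prod_div_distrib, prod_mul_distrib, prod_pow, gchoose_natCast_sub_one_add,
    gchoose_natCast_sub_one_add, gchoose_natCast_sub_one_add, div_mul_div_comm, div_pow, ← sq,
    div_div_div_cancel_right₀ hf]

theorem secondMoment_factor_pos {m c T : ℝ} (hm : 1 ≤ m) (hc : 0 ≤ c) (hT : 0 < T) :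
    0 < 1 + 2 * c * m / T + c ^ 2 * m * (m - 1) / T ^ 2 := by
  have hm1 : 0 ≤ m - 1 := sub_nonneg.2 hm
  have hm0 : 0 ≤ m := by linarith
  have : 0 ≤ c ^ 2 * m * (m - 1) / T ^ 2 := by positivity
  have : 0 ≤ 2 * c * m / T := by positivity
  linarith

theorem secondMoment_factor_eq {m c T0 : ℝ} (hm : 0 ≤ m) (hmc : m * c ≠ 0) (n : ℝ)
    (hT : T0 + n * m * c ≠ 0) :
    1 + 2 * c * m / (T0 + n * m * c) + c ^ 2 * m * (m - 1) / (T0 + n * m * c) ^ 2 =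
      ((T0 + m * c + c * √m) / (m * c) + n) * ((T0 + m * c - c * √m) / (m * c) + n) /
        (T0 / (m * c) + n) ^ 2 := by
  have hs : √m ^ 2 = m := Real.sq_sqrt hm
  have hm0 : m ≠ 0 := left_ne_zero_of_mul hmc
  have hc0 : c ≠ 0 := right_ne_zero_of_mul hmc
  have hT' : T0 + c * m * n ≠ 0 := by convert hT using 2; ring
  rw [div_add' _ _ _ hmc, div_add' _ _ _ hmc, div_add' _ _ _ hmc]
  field_simp
  linear_combination c ^ 2 * hs

theorem urnT_ne_zero {W0 B0 : ℕ} (h : W0 + B0 ≠ 0) (m c n : ℕ) : urnT W0 B0 m c n ≠ 0 := by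
  unfold urnT
  omega

theorem momR_zero (W0 B0 m c s : ℕ) : momR W0 B0 m c s 0 = (W0 : ℝ) ^ s := by
  simp only [momR, massR, ite_mul, one_mul, zero_mul]
  rw [sum_ite_eq', if_pos (by simp [urnT])]

theorem sum_massR_succ_mul (W0 B0 m c n : ℕ) (f : ℕ → ℝ) :
    ∑ v ∈ range (urnT W0 B0 m c (n + 1) + 1), massR W0 B0 m c (n + 1) v * f v =
      ∑ w ∈ range (urnT W0 B0 m c n + 1), massR W0 B0 m c n w *
        ∑ k ∈ range (m + 1), (m.choose k * (w : ℝ) ^ k *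
          ((urnT W0 B0 m c n : ℝ) - w) ^ (m - k) / (urnT W0 B0 m c n : ℝ) ^ m) * f (w + c * k) := by
  simp only [massR, sum_mul, ite_mul, zero_mul]
  rw [sum_comm]
  refine sum_congr rfl fun w hw => ?_
  rw [mul_sum, sum_comm]
  refine sum_congr rfl fun k hk => ?_
  have hmem : w + c * k ∈ range (urnT W0 B0 m c (n + 1) + 1) := by
    simp only [mem_range, urnT] at hw hk ⊢
    nlinarith
  rw [sum_ite_eq', if_pos hmem]
  ring

theorem momR_succ {W0 B0 m c n : ℕ} (hT : urnT W0 B0 m c n ≠ 0) (s : ℕ) :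
    momR W0 B0 m c s (n + 1) =
      ∑ w ∈ range (urnT W0 B0 m c n + 1), massR W0 B0 m c n w *
        ∑ k ∈ range (m + 1),
          (bernsteinPolynomial ℝ m k).eval ((w : ℝ) / urnT W0 B0 m c n) * ((w : ℝ) + c * k) ^ s := by
  rw [momR, sum_massR_succ_mul]
  refine sum_congr rfl fun w _ => congrArg _ (sum_congr rfl fun k hk => ?_)
  rw [bernsteinPolynomial_eval_div (Nat.lt_succ_iff.mp (mem_range.mp hk)) (by exact_mod_cast hT)]
  push_cast
  rfl

theorem momR_one_succ {W0 B0 m c n : ℕ} (hT : urnT W0 B0 m c n ≠ 0) :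
    momR W0 B0 m c 1 (n + 1) = (1 + m * c / urnT W0 B0 m c n) * momR W0 B0 m c 1 n := by
  rw [momR_succ hT, momR, mul_sum]
  refine sum_congr rfl fun w _ => ?_
  simp only [pow_one, sum_bernsteinPolynomial_eval_mul_add]
  ring

theorem momR_two_succ {W0 B0 m c n : ℕ} (hT : urnT W0 B0 m c n ≠ 0) :
    momR W0 B0 m c 2 (n + 1) =
      (1 + 2 * c * m / urnT W0 B0 m c n + c ^ 2 * m * (m - 1) / (urnT W0 B0 m c n : ℝ) ^ 2) *
          momR W0 B0 m c 2 n +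
        c ^ 2 * m / urnT W0 B0 m c n * momR W0 B0 m c 1 n := by
  rw [momR_succ hT, momR, momR, mul_sum, mul_sum, ← sum_add_distrib]
  refine sum_congr rfl fun w _ => ?_
  rw [sum_bernsteinPolynomial_eval_mul_add_sq]
  ring

theorem momR_one_eq {W0 B0 : ℕ} (h : W0 + B0 ≠ 0) (m c n : ℕ) :
    momR W0 B0 m c 1 n = W0 / ((W0 : ℝ) + B0) * urnT W0 B0 m c n := by
  have hT0 : (W0 : ℝ) + B0 ≠ 0 := by exact_mod_cast h
  induction n with
  | zero =>
    rw [momR_zero, urnT]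
    push_cast
    field_simp
    ring
  | succ n ih =>
    have hT : (urnT W0 B0 m c n : ℝ) ≠ 0 := by exact_mod_cast urnT_ne_zero h m c n
    rw [momR_one_succ (urnT_ne_zero h m c n), ih]
    field_simp
    push_cast [urnT]
    ring

theorem momR_two_succ_eq {W0 B0 : ℕ} (h : W0 + B0 ≠ 0) (m c n : ℕ) :
    momR W0 B0 m c 2 (n + 1) =
      (1 + 2 * c * m / urnT W0 B0 m c n + c ^ 2 * m * (m - 1) / (urnT W0 B0 m c n : ℝ) ^ 2) *
          momR W0 B0 m c 2 n +
        W0 * c ^ 2 * m / ((W0 : ℝ) + B0) := by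
  have hT : (urnT W0 B0 m c n : ℝ) ≠ 0 := by exact_mod_cast urnT_ne_zero h m c n
  rw [momR_two_succ (urnT_ne_zero h m c n), momR_one_eq h]
  field_simp

theorem modelR_expectation_and_secondMoment_general (W0 B0 m c : ℕ) (hm : 1 ≤ m) (hc : 1 ≤ c)
    (hW0 : 1 ≤ W0)
    (mu1 mu2 : ℝ)
    (hmu1 : mu1 = (((W0 : ℝ) + B0) + (m : ℝ) * c + (c : ℝ) * Real.sqrt m) / ((m : ℝ) * c))
    (hmu2 : mu2 = (((W0 : ℝ) + B0) + (m : ℝ) * c - (c : ℝ) * Real.sqrt m) / ((m : ℝ) * c)) :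
    (∀ n : ℕ, momR W0 B0 m c 1 n =
      (W0 : ℝ) / ((W0 : ℝ) + B0) * ((n : ℝ) * m * c + ((W0 : ℝ) + B0))) ∧
    (∀ n : ℕ, momR W0 B0 m c 2 n =
      (gchoose ((n : ℝ) - 1 + mu1) n * gchoose ((n : ℝ) - 1 + mu2) n) /
          (gchoose ((n : ℝ) - 1 + ((W0 : ℝ) + B0) / ((m : ℝ) * c)) n) ^ 2 *
        ((W0 : ℝ) ^ 2 + (W0 : ℝ) * (c : ℝ) ^ 2 * m / ((W0 : ℝ) + B0) *
          ∑ ℓ ∈ Finset.range n,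
            (gchoose ((ℓ : ℝ) + ((W0 : ℝ) + B0) / ((m : ℝ) * c)) (ℓ + 1)) ^ 2 /
              (gchoose ((ℓ : ℝ) + mu1) (ℓ + 1) * gchoose ((ℓ : ℝ) + mu2) (ℓ + 1)))) := by
  have hT0 : W0 + B0 ≠ 0 := by omega
  have hT_eq : ∀ j : ℕ, (urnT W0 B0 m c j : ℝ) = W0 + B0 + j * m * c := fun j => by
    push_cast [urnT]
    ring
  refine ⟨fun n => by rw [momR_one_eq hT0, hT_eq]; ring, fun n => ?_⟩
  set a : ℕ → ℝ := fun j =>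
    1 + 2 * c * m / urnT W0 B0 m c j + c ^ 2 * m * (m - 1) / (urnT W0 B0 m c j : ℝ) ^ 2
  have ha : ∀ j, a j ≠ 0 := fun j => (secondMoment_factor_pos (by exact_mod_cast hm)
    (by positivity) (by exact_mod_cast Nat.pos_of_ne_zero (urnT_ne_zero hT0 m c j))).ne'
  have hprod : ∀ k : ℕ, ∏ j ∈ range k, a j = gchoose (k - 1 + mu1) k * gchoose (k - 1 + mu2) k /
      gchoose (k - 1 + ((W0 : ℝ) + B0) / ((m : ℝ) * c)) k ^ 2 := fun k => by
    rw [← prod_mul_div_sq_eq_gchoose]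
    refine prod_congr rfl fun j _ => ?_
    simp only [a, hT_eq, hmu1, hmu2]
    exact secondMoment_factor_eq (by positivity) (by positivity) j
      (by rw [← hT_eq]; exact_mod_cast urnT_ne_zero hT0 m c j)
  rw [eq_prod_mul_add_sum_div_prod_of_succ_eq ha (momR_two_succ_eq hT0 m c) n, momR_zero, hprod,
    mul_sum]
  congr 2
  refine sum_congr rfl fun ℓ _ => ?_
  rw [hprod, div_div_eq_mul_div, mul_div_assoc]
  push_cast
  simp only [add_sub_cancel_right]

/-- In model `R`, the exact expectation `E(W_n) = (W_0/T_0)·(n·m·c + T_0)` and the exact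
second moment `E(W_n²)`, which determines the variance `V(W_n) = E(W_n²) − E(W_n)²`. -/
theorem modelR_expectation_and_secondMoment (W0 B0 m c : ℕ) (hm : 1 ≤ m) (hc : 1 ≤ c)
    (hW0 : 1 ≤ W0) (hB0 : 1 ≤ B0) (hT0 : m ≤ W0 + B0)
    (mu1 mu2 : ℝ)
    (hmu1 : mu1 = (((W0 : ℝ) + B0) + (m : ℝ) * c + (c : ℝ) * Real.sqrt m) / ((m : ℝ) * c))
    (hmu2 : mu2 = (((W0 : ℝ) + B0) + (m : ℝ) * c - (c : ℝ) * Real.sqrt m) / ((m : ℝ) * c)) :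
    (∀ n : ℕ, momR W0 B0 m c 1 n =
      (W0 : ℝ) / ((W0 : ℝ) + B0) * ((n : ℝ) * m * c + ((W0 : ℝ) + B0))) ∧
    (∀ n : ℕ, momR W0 B0 m c 2 n =
      (gchoose ((n : ℝ) - 1 + mu1) n * gchoose ((n : ℝ) - 1 + mu2) n) /
          (gchoose ((n : ℝ) - 1 + ((W0 : ℝ) + B0) / ((m : ℝ) * c)) n) ^ 2 *
        ((W0 : ℝ) ^ 2 + (W0 : ℝ) * (c : ℝ) ^ 2 * m / ((W0 : ℝ) + B0) *
          ∑ ℓ ∈ Finset.range n,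
            (gchoose ((ℓ : ℝ) + ((W0 : ℝ) + B0) / ((m : ℝ) * c)) (ℓ + 1)) ^ 2 /
              (gchoose ((ℓ : ℝ) + mu1) (ℓ + 1) * gchoose ((ℓ : ℝ) + mu2) (ℓ + 1)))) :=
  modelR_expectation_and_secondMoment_general W0 B0 m c hm hc hW0 mu1 mu2 hmu1 hmu2
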